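/- In the nested sequent calculus for GL, the disjunction rule is height-preserving invertible: if Γ{A ∨ B} has a cut-free derivation of height h, then Γ{A, B} has a cut-free derivation of height at most h. -/
import Mathlib


/-- Formulas of GL in negation normal form. -/
inductive Formula : Type where
  | pos : ℕ → Formula
  | neg : ℕ → Formula
  | and : Formula → Formula → Formula
  | or  : Formula → Formula → Formula
  | box : Formula → Formula
  | dia : Formula → Formula
deriving DecidableEq

/-- Negation `A⊥` of a formula, via De Morgan duality. -/
def Formula.negate : Formula → Formula
  | .pos a => .neg a
  | .neg a => .pos a
  | .and A B => .or A.negate B.negate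
  | .or A B => .and A.negate B.negate
  | .box A => .dia A.negate
  | .dia A => .box A.negate

/-- An element of a nested sequent: a formula or a nested (bracketed) sequent. -/
inductive SeqElem : Type where
  | fml : Formula → SeqElem
  | nest : List SeqElem → SeqElem

/-- A nested sequent. -/
abbrev Sequent := List SeqElem

/-- Unary contexts: a nested sequent with a single hole. -/
inductive Ctx : Type where
  | hole : Sequent → Ctx
  | nest : Sequent → Ctx → Ctx

/-- Fill the hole of a context with a sequent. -/
def Ctx.fill : Ctx → Sequent → Sequent
  | .hole Δ, Γ => Δ ++ Γ
  | .nest Δ c, Γ => .nest (c.fill Γ) :: Δ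

/-- Depth of a context: number of brackets surrounding the hole. -/
def Ctx.depth : Ctx → ℕ
  | .hole _ => 0
  | .nest _ c => c.depth + 1

/-- Equivalence of nested sequents up to (deep) exchange. -/
inductive SeqEquiv : Sequent → Sequent → Prop where
  | nil : SeqEquiv [] []
  | cons {e : SeqElem} {Γ Δ : Sequent} : SeqEquiv Γ Δ → SeqEquiv (e :: Γ) (e :: Δ)
  | consNest {Γ' Δ' Γ Δ : Sequent} :
      SeqEquiv Γ' Δ' → SeqEquiv Γ Δ → SeqEquiv (.nest Γ' :: Γ) (.nest Δ' :: Δ)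
  | swap (a b : SeqElem) (Γ : Sequent) : SeqEquiv (a :: b :: Γ) (b :: a :: Γ)
  | trans {Γ Δ Θ : Sequent} : SeqEquiv Γ Δ → SeqEquiv Δ Θ → SeqEquiv Γ Θ

/-- `DerivH n Γ`: `Γ` has a cut-free derivation of height at most `n`. -/
inductive DerivH : ℕ → Sequent → Prop where
  | id (n : ℕ) (c : Ctx) (a : ℕ) :
      DerivH n (c.fill [.fml (.pos a), .fml (.neg a)])
  | and {n : ℕ} {c : Ctx} {A B : Formula} :
      DerivH n (c.fill [.fml A]) → DerivH n (c.fill [.fml B]) →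
      DerivH (n + 1) (c.fill [.fml (.and A B)])
  | or {n : ℕ} {c : Ctx} {A B : Formula} :
      DerivH n (c.fill [.fml A, .fml B]) →
      DerivH (n + 1) (c.fill [.fml (.or A B)])
  | box {n : ℕ} {c : Ctx} {A : Formula} :
      DerivH n (c.fill [.nest [.fml (.dia A.negate), .fml A]]) →
      DerivH (n + 1) (c.fill [.fml (.box A)])
  | dia {n : ℕ} (c d : Ctx) {A : Formula} :
      0 < d.depth →
      DerivH n (c.fill (d.fill [.fml A] ++ [.fml (.dia A)])) →
      DerivH (n + 1) (c.fill (d.fill [] ++ [.fml (.dia A)]))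
  | exch {n : ℕ} {Γ Δ : Sequent} : SeqEquiv Γ Δ → DerivH n Γ → DerivH n Δ
  | up {n : ℕ} {Γ : Sequent} : DerivH n Γ → DerivH (n + 1) Γ

/-- Derivability where cut is permitted on formulas satisfying `P`. -/
inductive DerivWith (P : Formula → Prop) : Sequent → Prop where
  | id (c : Ctx) (a : ℕ) :
      DerivWith P (c.fill [.fml (.pos a), .fml (.neg a)])
  | and {c : Ctx} {A B : Formula} :
      DerivWith P (c.fill [.fml A]) → DerivWith P (c.fill [.fml B]) →
      DerivWith P (c.fill [.fml (.and A B)])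
  | or {c : Ctx} {A B : Formula} :
      DerivWith P (c.fill [.fml A, .fml B]) →
      DerivWith P (c.fill [.fml (.or A B)])
  | box {c : Ctx} {A : Formula} :
      DerivWith P (c.fill [.nest [.fml (.dia A.negate), .fml A]]) →
      DerivWith P (c.fill [.fml (.box A)])
  | dia (c d : Ctx) {A : Formula} :
      0 < d.depth →
      DerivWith P (c.fill (d.fill [.fml A] ++ [.fml (.dia A)])) →
      DerivWith P (c.fill (d.fill [] ++ [.fml (.dia A)]))
  | cut {c : Ctx} {A : Formula} : P A →
      DerivWith P (c.fill [.fml A]) → DerivWith P (c.fill [.fml A.negate]) →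
      DerivWith P (c.fill [])
  | exch {Γ Δ : Sequent} : SeqEquiv Γ Δ → DerivWith P Γ → DerivWith P Δ

/-- Cut-free derivability. -/
abbrev Deriv : Sequent → Prop := DerivWith (fun _ => False)


/-- `RepAB A B Γ Δ`: `Δ` is obtained from `Γ` by replacing some (top-level or nested)
occurrences of the formula `A ∨ B` by the two formulas `A, B`. -/
inductive RepAB (A B : Formula) : Sequent → Sequent → Prop where
  | nil : RepAB A B [] []
  | keep {e : SeqElem} {Γ Δ : Sequent} : RepAB A B Γ Δ → RepAB A B (e :: Γ) (e :: Δ)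
  | nest {Γ' Δ' Γ Δ : Sequent} :
      RepAB A B Γ' Δ' → RepAB A B Γ Δ → RepAB A B (.nest Γ' :: Γ) (.nest Δ' :: Δ)
  | repl {Γ Δ : Sequent} :
      RepAB A B Γ Δ → RepAB A B (.fml (.or A B) :: Γ) (.fml A :: .fml B :: Δ)

theorem RepAB.refl (A B : Formula) : ∀ Γ : Sequent, RepAB A B Γ Γ := by
  intro Γ; induction Γ with
  | nil => exact RepAB.nil
  | cons e Γ ih => exact RepAB.keep ih

theorem RepAB.nil_right {A B : Formula} {Δ : Sequent} (h : RepAB A B [] Δ) : Δ = [] := by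
  cases h; rfl

theorem RepAB.append {A B : Formula} {Γ₁ Δ₁ Γ₂ Δ₂ : Sequent}
    (h₁ : RepAB A B Γ₁ Δ₁) (h₂ : RepAB A B Γ₂ Δ₂) : RepAB A B (Γ₁ ++ Γ₂) (Δ₁ ++ Δ₂) := by
  induction h₁ with
  | nil => exact h₂
  | keep _ ih => exact RepAB.keep ih
  | nest hn _ _ ih => exact RepAB.nest hn ih
  | repl _ ih => exact RepAB.repl ih

theorem RepAB.append_decomp {A B : Formula} : ∀ (Γ₁ Γ₂ Δ : Sequent),
    RepAB A B (Γ₁ ++ Γ₂) Δ → ∃ Δ₁ Δ₂, Δ = Δ₁ ++ Δ₂ ∧ RepAB A B Γ₁ Δ₁ ∧ RepAB A B Γ₂ Δ₂ := by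
  intro Γ₁
  induction Γ₁ with
  | nil => intro Γ₂ Δ h; exact ⟨[], Δ, rfl, RepAB.nil, h⟩
  | cons e Γ ih =>
    intro Γ₂ Δ h
    cases h with
    | keep h =>
      obtain ⟨Δ₁, Δ₂, rfl, h1, h2⟩ := ih _ _ h
      exact ⟨e :: Δ₁, Δ₂, rfl, RepAB.keep h1, h2⟩
    | nest hn h =>
      obtain ⟨Δ₁, Δ₂, rfl, h1, h2⟩ := ih _ _ h
      exact ⟨_ :: Δ₁, Δ₂, rfl, RepAB.nest hn h1, h2⟩
    | repl h =>
      obtain ⟨Δ₁, Δ₂, rfl, h1, h2⟩ := ih _ _ h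
      exact ⟨_ :: _ :: Δ₁, Δ₂, rfl, RepAB.repl h1, h2⟩

theorem RepAB.fill {A B : Formula} (c : Ctx) {S S' : Sequent} (h : RepAB A B S S') :
    RepAB A B (c.fill S) (c.fill S') := by
  induction c with
  | hole Θ => exact RepAB.append (RepAB.refl A B Θ) h
  | nest Θ c ih => exact RepAB.nest ih (RepAB.refl A B Θ)

/-- Decomposition of a `RepAB` whose left side is a filled context. -/
theorem RepAB.fill_decomp {A B : Formula} : ∀ (c : Ctx) (S Δ : Sequent),
    RepAB A B (c.fill S) Δ →
    ∃ c' : Ctx, c'.depth = c.depth ∧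
      (∀ T T', RepAB A B T T' → RepAB A B (c.fill T) (c'.fill T')) ∧
      ∃ S', RepAB A B S S' ∧ Δ = c'.fill S' := by
  intro c
  induction c with
  | hole Θ =>
    intro S Δ h
    obtain ⟨Δ₁, Δ₂, rfl, h1, h2⟩ := RepAB.append_decomp Θ S Δ h
    exact ⟨Ctx.hole Δ₁, rfl, fun T T' hT => RepAB.append h1 hT, Δ₂, h2, rfl⟩
  | nest Θ c ih =>
    intro S Δ h
    cases h with
    | keep h =>
      rename_i Δ₀
      obtain ⟨c', hdep, htr, S', hS, heq⟩ := ih S _ (RepAB.refl A B (c.fill S))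
      exact ⟨Ctx.nest Δ₀ c', by simp [Ctx.depth, hdep],
        fun T T' hT => RepAB.nest (htr T T' hT) h, S', hS, by simp [Ctx.fill, ← heq]⟩
    | nest hn h =>
      rename_i Δ' Δ₀
      obtain ⟨c', hdep, htr, S', hS, heq⟩ := ih S _ hn
      exact ⟨Ctx.nest Δ₀ c', by simp [Ctx.depth, hdep],
        fun T T' hT => RepAB.nest (htr T T' hT) h, S', hS, by simp [Ctx.fill, ← heq]⟩

theorem SeqEquiv.refl : ∀ Γ : Sequent, SeqEquiv Γ Γ := by
  intro Γ; induction Γ with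
  | nil => exact SeqEquiv.nil
  | cons e Γ ih => exact SeqEquiv.cons ih

theorem SeqEquiv.of_perm {Γ Δ : Sequent} (h : List.Perm Γ Δ) : SeqEquiv Γ Δ := by
  induction h with
  | nil => exact SeqEquiv.nil
  | cons e _ ih => exact SeqEquiv.cons ih
  | swap a b Γ => exact SeqEquiv.swap b a Γ
  | trans _ _ ih1 ih2 => exact SeqEquiv.trans ih1 ih2

/-- Pull a replacement backwards through an exchange step. -/
theorem RepAB.exch {A B : Formula} {Γ Δ : Sequent} (he : SeqEquiv Γ Δ) :
    ∀ Δ', RepAB A B Δ Δ' → ∃ Γ', RepAB A B Γ Γ' ∧ SeqEquiv Γ' Δ' := by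
  induction he with
  | nil =>
    intro Δ' h; rw [RepAB.nil_right h]; exact ⟨[], RepAB.nil, SeqEquiv.nil⟩
  | cons hΓΔ ih =>
    intro Δ' h
    cases h with
    | keep h =>
      obtain ⟨Γ', hr, he⟩ := ih _ h
      exact ⟨_ :: Γ', RepAB.keep hr, SeqEquiv.cons he⟩
    | nest hn h =>
      obtain ⟨Γ', hr, he⟩ := ih _ h
      exact ⟨_ :: Γ', RepAB.nest hn hr, SeqEquiv.cons he⟩
    | repl h =>
      obtain ⟨Γ', hr, he⟩ := ih _ h
      exact ⟨_ :: _ :: Γ', RepAB.repl hr, SeqEquiv.cons (SeqEquiv.cons he)⟩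
  | consNest hin hΓΔ ihin ih =>
    intro Δ' h
    cases h with
    | keep h =>
      obtain ⟨Γ', hr, he⟩ := ih _ h
      exact ⟨_ :: Γ', RepAB.keep hr, SeqEquiv.consNest hin he⟩
    | nest hn h =>
      obtain ⟨Γin', hrin, hein⟩ := ihin _ hn
      obtain ⟨Γ', hr, he⟩ := ih _ h
      exact ⟨_ :: Γ', RepAB.nest hrin hr, SeqEquiv.consNest hein he⟩
  | swap a b Γ =>
    intro Δ' h
    obtain ⟨Δb, Δrest, rfl, hb, hrest⟩ := RepAB.append_decomp [b] (a :: Γ) Δ' h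
    obtain ⟨Δa, ΔΓ, rfl, ha, hΓ⟩ := RepAB.append_decomp [a] Γ Δrest hrest
    refine ⟨Δa ++ Δb ++ ΔΓ, ?_, ?_⟩
    · have : RepAB A B ([a] ++ ([b] ++ Γ)) (Δa ++ (Δb ++ ΔΓ)) :=
        RepAB.append ha (RepAB.append hb hΓ)
      simpa using this
    · refine SeqEquiv.of_perm ?_
      simpa [List.append_assoc] using
        List.Perm.append_right ΔΓ (List.perm_append_comm (l₁ := Δa) (l₂ := Δb))
  | trans h1 h2 ih1 ih2 =>
    intro Δ' h
    obtain ⟨Γ₂, hr2, he2⟩ := ih2 _ h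
    obtain ⟨Γ₁, hr1, he1⟩ := ih1 _ hr2
    exact ⟨Γ₁, hr1, SeqEquiv.trans he1 he2⟩

/-- Main lemma: derivability is preserved (height-preservingly) under replacement. -/
theorem DerivH.rep {A B : Formula} : ∀ {h : ℕ} {Γ : Sequent}, DerivH h Γ →
    ∀ Δ, RepAB A B Γ Δ → DerivH h Δ := by
  intro h Γ hd
  induction hd with
  | id n c a =>
    intro Δ hr
    obtain ⟨c', _, _, S', hS, rfl⟩ := RepAB.fill_decomp c _ _ hr
    cases hS with
    | keep h1 => cases h1 with
      | keep h2 => cases h2 with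
        | nil => exact DerivH.id n c' a
  | and p1 p2 ih1 ih2 =>
    intro Δ hr
    obtain ⟨c', _, htr, S', hS, rfl⟩ := RepAB.fill_decomp _ _ _ hr
    cases hS with
    | keep h1 =>
      cases h1 with
      | nil =>
        exact DerivH.and (ih1 _ (htr _ _ (RepAB.refl A B _)))
          (ih2 _ (htr _ _ (RepAB.refl A B _)))
  | or p ih =>
    intro Δ hr
    obtain ⟨c', _, htr, S', hS, rfl⟩ := RepAB.fill_decomp _ _ _ hr
    cases hS with
    | keep h1 =>
      cases h1 with
      | nil => exact DerivH.or (ih _ (htr _ _ (RepAB.refl A B _)))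
    | repl h1 =>
      cases h1 with
      | nil => exact DerivH.up (ih _ (htr _ _ (RepAB.refl A B _)))
  | box p ih =>
    intro Δ hr
    obtain ⟨c', _, htr, S', hS, rfl⟩ := RepAB.fill_decomp _ _ _ hr
    cases hS with
    | keep h1 =>
      cases h1 with
      | nil => exact DerivH.box (ih _ (htr _ _ (RepAB.refl A B _)))
  | dia c d hdep p ih =>
    rename_i A'
    intro Δ hr
    obtain ⟨c', _, htrc, S', hS, rfl⟩ := RepAB.fill_decomp c _ _ hr
    obtain ⟨S₁, S₂, rfl, h1, h2⟩ := RepAB.append_decomp _ _ _ hS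
    cases h2 with
    | keep h2' =>
      cases h2' with
      | nil =>
        obtain ⟨d', hdep', htrd, S₀, hS₀, rfl⟩ := RepAB.fill_decomp d _ _ h1
        rw [RepAB.nil_right hS₀]
        have hprem : RepAB A B (c.fill (d.fill [.fml A'] ++ [.fml (.dia A')]))
            (c'.fill (d'.fill [.fml A'] ++ [.fml (.dia A')])) :=
          htrc _ _ (RepAB.append (htrd _ _ (RepAB.refl A B _)) (RepAB.refl A B _))
        exact DerivH.dia c' d' (hdep' ▸ hdep) (ih _ hprem)
  | exch he hd ih =>
    intro Δ hr
    obtain ⟨Γ', hr', he'⟩ := RepAB.exch he _ hr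
    exact DerivH.exch he' (ih _ hr')
  | up hd ih =>
    intro Δ hr
    exact DerivH.up (ih _ hr)

/-- the disjunction rule is height-preserving invertible. -/
theorem or_inversion (h : ℕ) (c : Ctx) (A B : Formula)
    (hd : DerivH h (c.fill [.fml (.or A B)])) :
    DerivH h (c.fill [.fml A, .fml B]) := by
  exact DerivH.rep hd _ (RepAB.fill c (RepAB.repl RepAB.nil))
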